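/- Let ζ be a primitive p-th root of unity for a prime p, and let a be a nonzero ideal of the ring of integers of an imaginary quadratic field K with N(a) > 3 and gcd(a ∩ Z, 2) = 1. If the extension of a to Z[ζ] divides (ζ − 1)Z[ζ], then taking norms yields N(a)^{φ(p)/2} divides p; in particular no such p ∈ {2,3,5,7} exists. -/

import Mathlib

/-!
Since `[L : ℚ] = 2 · (p - 1)/2 = φ(p)` and `ζ ∈ L`, the field `L` is the `p`-th cyclotomic field,
where `(ζ - 1)` has norm `p`. Extending `a` to `𝓞 L` raises its norm to the power `[L : K]`, so
`N(a)^{(p-1)/2} ∣ p`. For `p ∈ {3, 5, 7}` this contradicts `N(a) ≥ 4`, and `p = 2` would force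
`[L : K] = 0`.
-/

open NumberField IntermediateField

theorem IsCyclotomicExtension.of_finrank_eq_totient {L : Type*} [Field L] [NumberField L]
    {n : ℕ} [NeZero n] {ζ : L} (hζ : IsPrimitiveRoot ζ n)
    (hL : Module.finrank ℚ L = n.totient) : IsCyclotomicExtension {n} ℚ L := by
  have hdeg : Module.finrank ℚ ℚ⟮ζ⟯ = n.totient := by
    rw [adjoin.finrank (hζ.isIntegral (NeZero.pos n)).tower_top,
      ← Polynomial.cyclotomic_eq_minpoly_rat hζ (NeZero.pos n), Polynomial.natDegree_cyclotomic]
  have htop : ⊤ = ℚ⟮ζ⟯ := (eq_of_le_of_finrank_eq le_top (by rw [finrank_top', hL, hdeg])).symm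
  have := (isCyclotomicExtension_singleton_iff_eq_adjoin n ℚ L ⊤ hζ).2 htop
  exact IsCyclotomicExtension.equiv _ ℚ _ topEquiv

theorem IsPrimitiveRoot.absNorm_span_sub_one_of_finrank_eq {L : Type*} [Field L] [NumberField L]
    {p : ℕ} [Fact p.Prime] (hp : p ≠ 2) {ζ : 𝓞 L} (hζ : IsPrimitiveRoot ζ p)
    (hL : Module.finrank ℚ L = p - 1) : Ideal.absNorm (Ideal.span {ζ - 1}) = p := by
  have hζL : IsPrimitiveRoot (ζ : L) p := hζ.map_of_injective RingOfIntegers.coe_injective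
  have := IsCyclotomicExtension.of_finrank_eq_totient hζL
    (by rw [hL, Nat.totient_prime Fact.out])
  rw [Ideal.absNorm_span_singleton]
  exact_mod_cast congrArg Int.natAbs (hζL.norm_toInteger_sub_one_of_prime_ne_two' hp)

theorem Ideal.absNorm_map_ringOfIntegers (K L : Type*) [Field K] [NumberField K]
    [Field L] [NumberField L] [Algebra K L] (a : Ideal (𝓞 K)) :
    absNorm (a.map (algebraMap (𝓞 K) (𝓞 L))) = absNorm a ^ Module.finrank K L := by
  rw [absNorm_algebraMap, ← IsFractionRing.finrank_eq (𝓞 K) K (𝓞 L) L]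

theorem no_small_root_of_unity_eigenvalue_general (p : ℕ) (hp : p.Prime)
    (K L : Type*) [Field K] [NumberField K] [Field L] [NumberField L] [Algebra K L]
    (hdeg : Module.finrank ℚ K = 2)
    (hL : Module.finrank K L = (p - 1) / 2)
    (ζ : 𝓞 L) (hζ : IsPrimitiveRoot ζ p)
    (a : Ideal (𝓞 K)) (hN : 3 < Ideal.absNorm a)
    (hdvd : Ideal.map (algebraMap (𝓞 K) (𝓞 L)) a ∣ Ideal.span {ζ - 1}) :
    Ideal.absNorm a ^ ((p - 1) / 2) ∣ p ∧ p ∉ ({2, 3, 5, 7} : Set ℕ) := by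
  have := Fact.mk hp
  have hp2 : p ≠ 2 := by
    rintro rfl
    exact Module.finrank_pos.ne' hL
  have hrank : Module.finrank ℚ L = p - 1 := by
    rw [← Module.finrank_mul_finrank ℚ K L, hdeg, hL]
    exact Nat.mul_div_cancel' (hp.even_sub_one hp2).two_dvd
  have hkey : Ideal.absNorm a ^ ((p - 1) / 2) ∣ p := by
    rw [← hL, ← Ideal.absNorm_map_ringOfIntegers,
      ← hζ.absNorm_span_sub_one_of_finrank_eq hp2 hrank]
    exact Ideal.absNorm_dvd_absNorm_of_le (Ideal.le_of_dvd hdvd)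
  refine ⟨hkey, fun hsmall ↦ ?_⟩
  have hle : 4 ^ ((p - 1) / 2) ≤ p :=
    (Nat.pow_le_pow_left hN _).trans (Nat.le_of_dvd hp.pos hkey)
  obtain rfl | rfl | rfl | rfl := hsmall
  · exact hp2 rfl
  all_goals norm_num at hle

/-- Let `ζ` be a primitive `p`-th root of unity (`p` prime) in the ring of integers
of a number field `L` with `[L : K] = φ(p)/2 = (p-1)/2`, where `K` is an imaginary
quadratic field, and let `a` be a nonzero ideal of `𝓞 K` with `N(a) > 3` and
`a ∩ ℤ` coprime to `2`.  If the extension of `a` to `𝓞 L` divides `(ζ - 1)`, then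
taking norms yields `N(a)^{φ(p)/2} ∣ p`; in particular no such `p ∈ {2,3,5,7}` exists. -/
theorem no_small_root_of_unity_eigenvalue (p : ℕ) (hp : p.Prime)
    (K L : Type*) [Field K] [NumberField K] [Field L] [NumberField L] [Algebra K L]
    (hdeg : Module.finrank ℚ K = 2) (himag : ∀ _ : K →+* ℝ, False)
    (hL : Module.finrank K L = (p - 1) / 2)
    (ζ : 𝓞 L) (hζ : IsPrimitiveRoot ζ p)
    (a : Ideal (𝓞 K)) (ha : a ≠ ⊥) (hN : 3 < Ideal.absNorm a)
    (hcoprime : ∃ m : ℤ, Odd m ∧ ∀ k : ℤ, (k : 𝓞 K) ∈ a ↔ m ∣ k)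
    (hdvd : Ideal.map (algebraMap (𝓞 K) (𝓞 L)) a ∣ Ideal.span {ζ - 1}) :
    Ideal.absNorm a ^ ((p - 1) / 2) ∣ p ∧ p ∉ ({2, 3, 5, 7} : Set ℕ) :=
  no_small_root_of_unity_eigenvalue_general p hp K L hdeg hL ζ hζ a hN hdvd
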